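/- Let n ≥ 3. On the Maxwell phase manifold of dimension 2n + n(n−1)/2, the (n+2)-form dF ∧ d(*F) is identically zero, where F = (1/2) F_{ij} dx^i ∧ dx^j and *F is the dual (n−2)-form *F = (1/(2(n−2)!)) F^{ij} ε_{ij}{}^{k₁…k_{n−2}} dx^{k₁} ∧ ⋯ ∧ dx^{k_{n−2}}. -/

import Mathlib

open scoped BigOperators

noncomputable section

namespace EDS

/-- Points of the model space `ℝ^ι` with coordinates indexed by `ι`. -/
abbrev Pt (ι : Type) : Type := ι → ℝ

/-- A differential `p`-form on `ℝ^ι`, represented by its (antisymmetric)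
coefficient functions: `ω idx` is the coefficient `ω_{idx 0 … idx (p-1)}`. -/
abbrev PForm (ι : Type) (p : ℕ) : Type := (Fin p → ι) → Pt ι → ℝ

variable {ι : Type} [Fintype ι] [DecidableEq ι]

/-- A `0`-form from a function. -/
def ofFun (f : Pt ι → ℝ) : PForm ι 0 := fun _ => f

/-- Partial derivative in the coordinate direction `u`. -/
def pd (u : ι) (f : Pt ι → ℝ) : Pt ι → ℝ :=
  fun x => fderiv ℝ f x (Pi.single u 1)

/-- Exterior derivative, in coefficient form:
`(dω)_{i₀…i_p} = Σ_k (-1)^k ∂_{i_k} ω_{i₀…î_k…i_p}`. -/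
def extd {p : ℕ} (ω : PForm ι p) : PForm ι (p + 1) :=
  fun idx x => ∑ k : Fin (p + 1), (-1 : ℝ) ^ (k : ℕ) * pd (idx k) (ω (idx ∘ k.succAbove)) x

/-- Wedge product, in coefficient form:
`(ω∧η)_{i₁…i_{p+q}} = (1/(p!q!)) Σ_{σ ∈ S_{p+q}} sgn σ · ω_{i_{σ(1)}…i_{σ(p)}} η_{i_{σ(p+1)}…i_{σ(p+q)}}`. -/
def wedge {p q : ℕ} (ω : PForm ι p) (η : PForm ι q) : PForm ι (p + q) :=
  fun idx x => ((p.factorial * q.factorial : ℕ) : ℝ)⁻¹ *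
    ∑ σ : Equiv.Perm (Fin (p + q)), ((Equiv.Perm.sign σ : ℤ) : ℝ) *
      (ω (fun i => idx (σ (Fin.castAdd q i))) x * η (fun j => idx (σ (Fin.natAdd p j))) x)

infixl:72 " ⋏ " => wedge

/-- Wedge product of a family of `1`-forms. -/
def wedgeFam {m : ℕ} (α : Fin m → PForm ι 1) : PForm ι m :=
  fun idx x => ∑ σ : Equiv.Perm (Fin m), ((Equiv.Perm.sign σ : ℤ) : ℝ) *
    ∏ t, α t (fun _ => idx (σ t)) x

/-- Multiplication of a `p`-form by a scalar function. -/
def fsmul (f : Pt ι → ℝ) {p : ℕ} (ω : PForm ι p) : PForm ι p := fun idx x => f x * ω idx x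

/-- Reinterpret a `p`-form as a `q`-form along a proof `p = q`. -/
def PForm.cast {p q : ℕ} (h : p = q) (ω : PForm ι p) : PForm ι q :=
  fun idx x => ω (fun i => idx (Fin.cast h i)) x

/-- The totally antisymmetric Levi-Civita symbol `ε`, with `ε(id) = 1`. -/
def eps {m : ℕ} (f : Fin m → Fin m) : ℝ :=
  if h : Function.Bijective f then ((Equiv.Perm.sign (Equiv.ofBijective f h) : ℤ) : ℝ) else 0

/-- The Lorentz (Minkowski) metric `η = diag(-1,1,…,1)` (diagonal entries). -/
def etaD {m : ℕ} (i : Fin m) : ℝ := if (i : ℕ) = 0 then -1 else 1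

/-- Assemble the index tuple `(i, j, k₁, …, k_{n-2})` as a map `Fin n → Fin n`. -/
def raiseIdx {n : ℕ} (i j : Fin n) (k : Fin (n - 2) → Fin n) : Fin n → Fin n :=
  fun t => if h0 : (t : ℕ) = 0 then i else if h1 : (t : ℕ) = 1 then j
    else k ⟨(t : ℕ) - 2, by have := t.isLt; omega⟩

/-! ### The Maxwell phase manifold in `n` spacetime dimensions -/

/-- Index type for the coordinates `A_i`, `F_{ij}` (`i < j`), `x^i` of the
Maxwell phase manifold of dimension `2n + n(n-1)/2`. -/
abbrev MC (n : ℕ) : Type := Fin n ⊕ ({p : Fin n × Fin n // p.1 < p.2} ⊕ Fin n)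

/-- The coordinate function `x^i`. -/
def xc (n : ℕ) (i : Fin n) : Pt (MC n) → ℝ := fun m => m (Sum.inr (Sum.inr i))

/-- The coordinate function `A_i`. -/
def Ac (n : ℕ) (i : Fin n) : Pt (MC n) → ℝ := fun m => m (Sum.inl i)

/-- The antisymmetric array `F_{ij} = -F_{ji}` built from the coordinates
`F_{ij}`, `i < j`. -/
def Fc (n : ℕ) (i j : Fin n) : Pt (MC n) → ℝ := fun m =>
  if h : i < j then m (Sum.inr (Sum.inl ⟨(i, j), h⟩))
  else if h' : j < i then - m (Sum.inr (Sum.inl ⟨(j, i), h'⟩)) else 0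

/-- The coordinate `1`-forms `dx^i`. -/
def dx (n : ℕ) (i : Fin n) : PForm (MC n) 1 := extd (ofFun (xc n i))

/-- The potential `1`-form `A = A_i dx^i`. -/
def Aform (n : ℕ) : PForm (MC n) 1 := ∑ i, fsmul (Ac n i) (dx n i)

/-- The field `2`-form `F = (1/2) F_{ij} dx^i ∧ dx^j`. -/
def Fform (n : ℕ) : PForm (MC n) 2 := (1/2 : ℝ) • ∑ i, ∑ j, fsmul (Fc n i j) (dx n i ⋏ dx n j)

/-- The dual field `(n-2)`-form
`*F = (1/(2(n-2)!)) F^{ij} ε_{ij}{}^{k₁…k_{n-2}} dx^{k₁} ∧ ⋯ ∧ dx^{k_{n-2}}`,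
indices raised with the Lorentz metric `η = diag(-1,1,…,1)`. -/
def starF (n : ℕ) : PForm (MC n) (n - 2) :=
  ((2 * (n - 2).factorial : ℕ) : ℝ)⁻¹ • ∑ i, ∑ j, ∑ k : Fin (n - 2) → Fin n,
    (etaD i * etaD j * (∏ t, etaD (k t)) * eps (raiseIdx i j k)) •
      fsmul (Fc n i j) (wedgeFam (fun t => dx n (k t)))

end EDS

/-!
Expanding both factors, `dF ∧ d*F` is a combination of the `(n+2)`-forms
`dF_{ij} ∧ dx^i ∧ dx^j ∧ dF_{i'j'} ∧ dx^{k₁} ∧ ⋯ ∧ dx^{k_{n-2}}` with coefficient a multiple of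
`ε_{i'j'k₁…k_{n-2}}` (the `dx` have constant coefficients, so `d(F_{ij} dx^I) = dF_{ij} ∧ dx^I`).
When `ε ≠ 0`, the indices `i', j', k₁, …, k_{n-2}` exhaust `1, …, n`. Hence either `i` or `j` is
some `k_t`, and `dx^i` or `dx^j` occurs twice, or `{i, j} ⊆ {i', j'}`, and then `dF_{ij}` is
`0` or `±dF_{i'j'}`. In both cases the wedge product of `1`-forms has two proportional factors, so
it vanishes, being a determinant.
-/

namespace EDS

open Finset Equiv

section Algebra

variable {ι : Type}

def HasConstCoeffs {p : ℕ} (ω : PForm ι p) : Prop := ∀ idx x y, ω idx x = ω idx y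

lemma wedge_smul_left (a : ℝ) {p q : ℕ} (ω : PForm ι p) (η : PForm ι q) :
    (a • ω) ⋏ η = a • (ω ⋏ η) := by
  funext idx x
  simp only [wedge, Pi.smul_apply, smul_eq_mul, mul_sum]
  exact sum_congr rfl fun σ _ => by ring

lemma wedge_smul_right (a : ℝ) {p q : ℕ} (ω : PForm ι p) (η : PForm ι q) :
    ω ⋏ (a • η) = a • (ω ⋏ η) := by
  funext idx x
  simp only [wedge, Pi.smul_apply, smul_eq_mul, mul_sum]
  exact sum_congr rfl fun σ _ => by ring

lemma wedge_sum_left {γ : Type*} (s : Finset γ) {p q : ℕ} (ω : γ → PForm ι p)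
    (η : PForm ι q) : (∑ i ∈ s, ω i) ⋏ η = ∑ i ∈ s, ω i ⋏ η := by
  funext idx x
  simp only [wedge, Finset.sum_apply, sum_mul, mul_sum]
  rw [sum_comm]

lemma wedge_sum_right {γ : Type*} (s : Finset γ) {p q : ℕ} (ω : PForm ι p)
    (η : γ → PForm ι q) : ω ⋏ (∑ i ∈ s, η i) = ∑ i ∈ s, ω ⋏ η i := by
  funext idx x
  simp only [wedge, Finset.sum_apply, mul_sum]
  rw [sum_comm]

lemma wedgeFam_apply_eq_det {m : ℕ} (β : Fin m → PForm ι 1) (idx : Fin m → ι) (x : Pt ι) :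
    wedgeFam β idx x = (Matrix.of fun u t => β t (fun _ => idx u) x).det := by
  rw [Matrix.det_apply]
  refine sum_congr rfl fun σ _ => ?_
  rw [Units.smul_def, zsmul_eq_mul]
  rfl

lemma hasConstCoeffs_wedgeFam {m : ℕ} {β : Fin m → PForm ι 1} (hβ : ∀ t, HasConstCoeffs (β t)) :
    HasConstCoeffs (wedgeFam β) := by
  intro idx x y
  simp only [wedgeFam_apply_eq_det, hβ _ _ x y]

lemma wedgeFam_eq_zero_of_eq_smul {m : ℕ} (β : Fin m → PForm ι 1) {a b : Fin m} (hab : a ≠ b)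
    (c : ℝ) (h : β b = c • β a) : wedgeFam β = 0 := by
  funext idx x
  show wedgeFam β idx x = 0
  rw [wedgeFam_apply_eq_det]
  set M := Matrix.of fun u t => β t (fun _ => idx u) x
  have hM : M = M.updateCol b (c • fun u => M u a) := by
    ext u t
    rcases eq_or_ne t b with rfl | ht
    · simp [M, h]
    · simp [ht]
  rw [hM, Matrix.det_updateCol_smul,
    Matrix.det_zero_of_column_eq hab fun u => by simp [Matrix.updateCol_apply], mul_zero]

def blockPerm {p q : ℕ} (ρ : Perm (Fin p)) (π : Perm (Fin q)) : Perm (Fin (p + q)) :=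
  finSumFinEquiv.permCongr (ρ.sumCongr π)

lemma blockPerm_castAdd {p q : ℕ} (ρ : Perm (Fin p)) (π : Perm (Fin q)) (t : Fin p) :
    blockPerm ρ π (Fin.castAdd q t) = Fin.castAdd q (ρ t) := by
  simp [blockPerm]

lemma blockPerm_natAdd {p q : ℕ} (ρ : Perm (Fin p)) (π : Perm (Fin q)) (s : Fin q) :
    blockPerm ρ π (Fin.natAdd p s) = Fin.natAdd p (π s) := by
  simp [blockPerm]

lemma sign_blockPerm {p q : ℕ} (ρ : Perm (Fin p)) (π : Perm (Fin q)) :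
    Perm.sign (blockPerm ρ π) = Perm.sign ρ * Perm.sign π := by
  rw [blockPerm, Perm.sign_permCongr, Perm.sign_sumCongr]

-- The `σ`-summand of the wedge is the sum of the terms of `wedgeFam (Fin.append α β)` over the
-- coset `σ · (Perm (Fin p) × Perm (Fin q))`, so every term is counted `p! q!` times.
lemma wedge_wedgeFam {p q : ℕ} (α : Fin p → PForm ι 1) (β : Fin q → PForm ι 1) :
    wedgeFam α ⋏ wedgeFam β = wedgeFam (Fin.append α β) := by
  funext idx x
  set g : Perm (Fin (p + q)) → ℝ := fun μ =>
    (Perm.sign μ : ℝ) * ∏ t, Fin.append α β t (fun _ => idx (μ t)) x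
  have hsplit : ∀ σ : Perm (Fin (p + q)),
      (Perm.sign σ : ℝ) * (wedgeFam α (fun i => idx (σ (Fin.castAdd q i))) x *
        wedgeFam β (fun j => idx (σ (Fin.natAdd p j))) x) =
      ∑ ρ, ∑ π, g (σ * blockPerm ρ π) := by
    intro σ
    simp only [wedgeFam, g, Fin.prod_univ_add, Perm.coe_mul,
      Function.comp_apply, Fin.append_left, Fin.append_right, blockPerm_castAdd,
      blockPerm_natAdd, Perm.sign_mul, sign_blockPerm]
    rw [sum_mul_sum, mul_sum]
    refine sum_congr rfl fun ρ _ => ?_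
    rw [mul_sum]
    refine sum_congr rfl fun π _ => ?_
    push_cast
    ring
  have hfact : ((p.factorial * q.factorial : ℕ) : ℝ) ≠ 0 := by positivity
  calc wedge (wedgeFam α) (wedgeFam β) idx x
      = ((p.factorial * q.factorial : ℕ) : ℝ)⁻¹ * ∑ σ, ∑ ρ, ∑ π, g (σ * blockPerm ρ π) := by
        simp only [wedge, hsplit]
    _ = ((p.factorial * q.factorial : ℕ) : ℝ)⁻¹ * ∑ _ρ : Perm (Fin p), ∑ _π : Perm (Fin q),
          ∑ σ, g σ := by
        rw [sum_comm]
        refine congrArg _ (sum_congr rfl fun ρ _ => ?_)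
        rw [sum_comm]
        exact sum_congr rfl fun π _ => Equiv.sum_comp (Equiv.mulRight (blockPerm ρ π)) g
    _ = wedgeFam (Fin.append α β) idx x := by
        simp only [sum_const, card_univ, Fintype.card_perm, Fintype.card_fin,
          nsmul_eq_mul, ← mul_assoc, ← Nat.cast_mul, inv_mul_cancel₀ hfact, one_mul]
        rfl

lemma wedge_eq_wedgeFam_pair (γ δ : PForm ι 1) : γ ⋏ δ = wedgeFam ![γ, δ] := by
  funext idx x
  simp [wedge, wedgeFam, Fin.prod_univ_two, Fin.fin_one_eq_zero]

end Algebra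

section Differentiability

variable {ι : Type} [Fintype ι]

def HasDifferentiableCoeffs {p : ℕ} (ω : PForm ι p) : Prop := ∀ idx, Differentiable ℝ (ω idx)

lemma hasDifferentiableCoeffs_fsmul {f : Pt ι → ℝ} (hf : Differentiable ℝ f) {p : ℕ}
    {ω : PForm ι p} (hω : HasConstCoeffs ω) : HasDifferentiableCoeffs (fsmul f ω) := by
  intro idx
  have hconst : fsmul f ω idx = fun x => f x * ω idx 0 :=
    funext fun x => by rw [fsmul, hω idx x 0]
  rw [hconst]
  exact hf.mul_const _

lemma HasDifferentiableCoeffs.smul {p : ℕ} {ω : PForm ι p} (hω : HasDifferentiableCoeffs ω)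
    (a : ℝ) : HasDifferentiableCoeffs (a • ω) :=
  fun idx => (hω idx).const_smul a

lemma hasDifferentiableCoeffs_sum {γ : Type*} {s : Finset γ} {p : ℕ} {ω : γ → PForm ι p}
    (h : ∀ i, HasDifferentiableCoeffs (ω i)) : HasDifferentiableCoeffs (∑ i ∈ s, ω i) := by
  intro idx
  rw [Finset.sum_apply]
  exact Differentiable.sum fun i _ => h i idx

end Differentiability

section ExteriorDerivative

variable {ι : Type} [DecidableEq ι]

lemma pd_coord (c u : ι) (x : Pt ι) : pd u (fun m : Pt ι => m c) x = if c = u then 1 else 0 := by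
  rw [pd, show (fun m : Pt ι => m c) = ContinuousLinearMap.proj (R := ℝ) c from rfl,
    ContinuousLinearMap.fderiv]
  simp [Pi.single_apply]

lemma extd_ofFun_apply (f : Pt ι → ℝ) (idx : Fin 1 → ι) (x : Pt ι) :
    extd (ofFun f) idx x = pd (idx 0) f x := by
  simp [extd, ofFun]

variable [Fintype ι]

lemma pd_smul (u : ι) {f : Pt ι → ℝ} {x : Pt ι} (hf : DifferentiableAt ℝ f x) (a : ℝ) :
    pd u (a • f) x = a * pd u f x := by
  rw [pd, pd, fderiv_const_smul hf]
  rfl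

lemma pd_sum {γ : Type*} (s : Finset γ) {f : γ → Pt ι → ℝ} (u : ι) (x : Pt ι)
    (h : ∀ i ∈ s, DifferentiableAt ℝ (f i) x) : pd u (∑ i ∈ s, f i) x = ∑ i ∈ s, pd u (f i) x := by
  rw [pd, fderiv_sum h]
  simp only [FunLike.coe_sum, Finset.sum_apply, pd]

lemma extd_smul (a : ℝ) {p : ℕ} {ω : PForm ι p} (hω : HasDifferentiableCoeffs ω) :
    extd (a • ω) = a • extd ω := by
  funext idx x
  simp only [extd, Pi.smul_apply, smul_eq_mul, mul_sum]
  refine sum_congr rfl fun k _ => ?_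
  rw [pd_smul _ (hω _ x)]
  ring

lemma extd_ofFun_smul (c : ℝ) {f : Pt ι → ℝ}
    (hf : Differentiable ℝ f) : extd (ofFun (c • f)) = c • extd (ofFun f) :=
  extd_smul c (ω := ofFun f) fun _ => hf

lemma extd_sum {γ : Type*} (s : Finset γ) {p : ℕ} {ω : γ → PForm ι p}
    (h : ∀ i, HasDifferentiableCoeffs (ω i)) : extd (∑ i ∈ s, ω i) = ∑ i ∈ s, extd (ω i) := by
  funext idx x
  simp only [extd, Finset.sum_apply]
  rw [sum_comm]
  refine sum_congr rfl fun k _ => ?_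
  rw [pd_sum s _ _ fun i _ => h i _ x, mul_sum]

-- Laplace expansion of the determinant along the new first column is exactly the formula for `extd`.
lemma extd_fsmul_wedgeFam {m : ℕ} {f : Pt ι → ℝ} (hf : Differentiable ℝ f)
    {β : Fin m → PForm ι 1} (hβ : ∀ t, HasConstCoeffs (β t)) :
    extd (fsmul f (wedgeFam β)) = wedgeFam (Fin.cons (extd (ofFun f)) β) := by
  funext idx x
  rw [wedgeFam_apply_eq_det, Matrix.det_succ_column_zero]
  refine sum_congr rfl fun k _ => ?_
  have hconst : fsmul f (wedgeFam β) (idx ∘ k.succAbove) =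
      wedgeFam β (idx ∘ k.succAbove) x • f :=
    funext fun y => by rw [fsmul, hasConstCoeffs_wedgeFam hβ _ y x, Pi.smul_apply, smul_eq_mul,
      mul_comm]
  rw [hconst, pd_smul _ (hf x), wedgeFam_apply_eq_det]
  have hminor : (Matrix.of fun u t => (Fin.cons (extd (ofFun f)) β : Fin (m + 1) → PForm ι 1) t
      (fun _ => idx u) x).submatrix k.succAbove Fin.succ =
      Matrix.of fun u t => β t (fun _ => (idx ∘ k.succAbove) u) x := by
    ext u t
    simp
  simp only [hminor, Matrix.of_apply, Fin.cons_zero, extd_ofFun_apply]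
  ring

end ExteriorDerivative

section Maxwell

lemma hasConstCoeffs_dx (n : ℕ) (i : Fin n) : HasConstCoeffs (dx n i) := by
  intro idx x y
  rw [dx, extd_ofFun_apply, extd_ofFun_apply]
  exact (pd_coord _ _ x).trans (pd_coord _ _ y).symm

lemma differentiable_Fc (n : ℕ) (i j : Fin n) : Differentiable ℝ (Fc n i j) := by
  unfold Fc
  split_ifs
  · exact differentiable_apply _
  · exact (differentiable_apply _).neg
  · exact differentiable_const 0

lemma Fc_swap (n : ℕ) (i j : Fin n) : Fc n j i = -Fc n i j := by
  funext m
  rcases lt_trichotomy i j with h | rfl | h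
  · simp [Fc, h, asymm h]
  · simp [Fc]
  · simp [Fc, h, asymm h]

lemma Fc_self (n : ℕ) (i : Fin n) : Fc n i i = 0 := by
  funext m
  simp [Fc]

lemma exists_Fc_eq_smul (n : ℕ) {i j i' j' : Fin n} (hi : i = i' ∨ i = j')
    (hj : j = i' ∨ j = j') : ∃ c : ℝ, Fc n i j = c • Fc n i' j' := by
  rcases hi with rfl | rfl <;> rcases hj with rfl | rfl
  · exact ⟨0, by rw [Fc_self, zero_smul]⟩
  · exact ⟨1, (one_smul _ _).symm⟩
  · exact ⟨-1, by rw [Fc_swap, neg_one_smul]⟩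
  · exact ⟨0, by rw [Fc_self, zero_smul]⟩

lemma eq_or_eq_of_raiseIdx_surjective {m : ℕ} {i j : Fin m} {k : Fin (m - 2) → Fin m}
    (hs : Function.Surjective (raiseIdx i j k)) {a : Fin m} (ha : a ∉ Set.range k) :
    a = i ∨ a = j := by
  obtain ⟨t, rfl⟩ := hs a
  simp only [raiseIdx] at ha ⊢
  split_ifs at ha ⊢
  · exact Or.inl rfl
  · exact Or.inr rfl
  · exact absurd ⟨_, rfl⟩ ha

def dFTerm (n : ℕ) (i j : Fin n) : PForm (MC n) 3 :=
  wedgeFam ![extd (ofFun (Fc n i j)), dx n i, dx n j]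

def starCoeff {n : ℕ} (i j : Fin n) (k : Fin (n - 2) → Fin n) : ℝ :=
  etaD i * etaD j * (∏ t, etaD (k t)) * eps (raiseIdx i j k)

def dStarFTerm (n : ℕ) (i j : Fin n) (k : Fin (n - 2) → Fin n) : PForm (MC n) (n - 2 + 1) :=
  wedgeFam (Fin.cons (extd (ofFun (Fc n i j))) fun t => dx n (k t))

lemma extd_Fform (n : ℕ) : extd (Fform n) = (1/2 : ℝ) • ∑ i, ∑ j, dFTerm n i j := by
  have hdx : ∀ i j, ∀ t, HasConstCoeffs (![dx n i, dx n j] t) := fun i j =>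
    Fin.forall_fin_two.2 ⟨hasConstCoeffs_dx n i, hasConstCoeffs_dx n j⟩
  have hterm : ∀ i j, HasDifferentiableCoeffs (fsmul (Fc n i j) (wedgeFam ![dx n i, dx n j])) :=
    fun i j => hasDifferentiableCoeffs_fsmul (differentiable_Fc n i j)
      (hasConstCoeffs_wedgeFam (hdx i j))
  simp only [Fform, wedge_eq_wedgeFam_pair]
  rw [extd_smul _ (hasDifferentiableCoeffs_sum fun i => hasDifferentiableCoeffs_sum (hterm i)),
    extd_sum _ fun i => hasDifferentiableCoeffs_sum (hterm i)]
  refine congrArg _ (sum_congr rfl fun i _ => ?_)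
  rw [extd_sum _ (hterm i)]
  exact sum_congr rfl fun j _ => extd_fsmul_wedgeFam (differentiable_Fc n i j) (hdx i j)

lemma extd_starF (n : ℕ) :
    extd (starF n) = ((2 * (n - 2).factorial : ℕ) : ℝ)⁻¹ •
      ∑ i, ∑ j, ∑ k, starCoeff i j k • dStarFTerm n i j k := by
  have hdx : ∀ (k : Fin (n - 2) → Fin n) t, HasConstCoeffs (dx n (k t)) :=
    fun k t => hasConstCoeffs_dx n (k t)
  have hterm : ∀ i j (k : Fin (n - 2) → Fin n),
      HasDifferentiableCoeffs (fsmul (Fc n i j) (wedgeFam fun t => dx n (k t))) :=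
    fun i j k => hasDifferentiableCoeffs_fsmul (differentiable_Fc n i j)
      (hasConstCoeffs_wedgeFam (hdx k))
  have hsum : ∀ i j, HasDifferentiableCoeffs (∑ k, starCoeff i j k •
      fsmul (Fc n i j) (wedgeFam fun t => dx n (k t))) :=
    fun i j => hasDifferentiableCoeffs_sum fun k => (hterm i j k).smul _
  simp only [starF, ← starCoeff.eq_1]
  rw [extd_smul _ (hasDifferentiableCoeffs_sum fun i => hasDifferentiableCoeffs_sum (hsum i)),
    extd_sum _ fun i => hasDifferentiableCoeffs_sum (hsum i)]
  refine congrArg _ (sum_congr rfl fun i _ => ?_)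
  rw [extd_sum _ (hsum i)]
  refine sum_congr rfl fun j _ => ?_
  rw [extd_sum _ fun k => (hterm i j k).smul _]
  refine sum_congr rfl fun k _ => ?_
  rw [extd_smul _ (hterm i j k), extd_fsmul_wedgeFam (differentiable_Fc n i j) (hdx k)]
  rfl

lemma dFTerm_wedge_dStarFTerm_eq_zero (n : ℕ) (i j i' j' : Fin n) {k : Fin (n - 2) → Fin n}
    (hs : Function.Surjective (raiseIdx i' j' k)) : dFTerm n i j ⋏ dStarFTerm n i' j' k = 0 := by
  rw [dFTerm, dStarFTerm, wedge_wedgeFam]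
  by_cases hi : i ∈ Set.range k
  · obtain ⟨t, rfl⟩ := hi
    exact wedgeFam_eq_zero_of_eq_smul _ (a := Fin.castAdd _ 1) (b := Fin.natAdd 3 t.succ)
      (by simp [Fin.ext_iff]; omega) 1 (by simp)
  by_cases hj : j ∈ Set.range k
  · obtain ⟨t, rfl⟩ := hj
    exact wedgeFam_eq_zero_of_eq_smul _ (a := Fin.castAdd _ 2) (b := Fin.natAdd 3 t.succ)
      (by simp [Fin.ext_iff]; omega) 1 (by simp)
  obtain ⟨c, hc⟩ := exists_Fc_eq_smul n (eq_or_eq_of_raiseIdx_surjective hs hi)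
    (eq_or_eq_of_raiseIdx_surjective hs hj)
  exact wedgeFam_eq_zero_of_eq_smul _ (a := Fin.natAdd 3 0) (b := Fin.castAdd _ 0)
    (by simp [Fin.ext_iff]) c (by simp [hc, extd_ofFun_smul c (differentiable_Fc n i' j')])

lemma sum_dFTerm_wedge_smul_dStarFTerm_eq_zero (n : ℕ) (i' j' : Fin n)
    (k : Fin (n - 2) → Fin n) :
    (∑ i, ∑ j, dFTerm n i j) ⋏ (starCoeff i' j' k • dStarFTerm n i' j' k) = 0 := by
  rw [wedge_smul_right]
  by_cases hb : Function.Bijective (raiseIdx i' j' k)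
  · simp only [wedge_sum_left, dFTerm_wedge_dStarFTerm_eq_zero n _ _ i' j' hb.surjective,
      Finset.sum_const_zero, smul_zero]
  · rw [starCoeff, eps, dif_neg hb, mul_zero, zero_smul]

end Maxwell

end EDS

open EDS

theorem stmt4_general (n : ℕ) : extd (Fform n) ⋏ extd (starF n) = 0 := by
  rw [extd_Fform, extd_starF, wedge_smul_left, wedge_smul_right]
  simp only [wedge_sum_right, sum_dFTerm_wedge_smul_dStarFTerm_eq_zero, Finset.sum_const_zero,
    smul_zero]

theorem stmt4 (n : ℕ) (hn : 3 ≤ n) : extd (Fform n) ⋏ extd (starF n) = 0 :=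
  stmt4_general n
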